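/- Let A, B, C be three pairwise distinct points on the unit sphere S², no two antipodal, such that the spherical angle at A equals the sum of the spherical angles at B and at C (a properly angled spherical triangle). Then the point D := B + C − A lies on S², and ABDC is an equiangular quadrilateral on S², i.e., the four spherical angles — at A between B and C, at B between A and D, at D between B and C, and at C between A and D — are all equal. Thus every properly angled spherical triangle is half of an equiangular quadrilateral cut along a diagonal. -/

import Mathlib

/-!
Write `p = ⟪A, B⟫`, `q = ⟪A, C⟫`, `r = ⟪B, C⟫` and let `α, β, γ` be the angles at `A, B, C`.
By the spherical laws of cosines and sines, `cos α · √(1 - p²)√(1 - q²) = r - pq` and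
`sin α · √(1 - p²)√(1 - q²) = √G`, where `G = 1 + 2pqr - p² - q² - r²` is the Gram determinant,
and cyclically. Clearing denominators in `cos α = cos (β + γ)` gives
`(1 - r)(1 + r - p - q)(1 + r + p + q) = 0`; the last factor is ruled out by `cos β = cos (α - γ)`,
so `r = p + q - 1`. This is exactly `‖B + C - A‖ = 1`, and then `D = B + C - A` has
`⟪D, B⟫ = q`, `⟪D, C⟫ = p`, `⟪A, D⟫ = r`: the quadrilateral `ABDC` has equal opposite sides and
equal diagonals. A spherical angle depends only on the three mutual inner products, so all four
angles are equal to `α`.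
-/

open Real EuclideanSpace
open scoped RealInnerProductSpace

/-- Spherical distance between two points of the unit sphere in `E³`. -/
noncomputable def sphDist (P Q : EuclideanSpace ℝ (Fin 3)) : ℝ :=
  Real.arccos ⟪P, Q⟫

/-- Spherical angle at `A` between `B` and `C`, i.e. the angle between the
tangent components of `B` and `C` at `A`. -/
noncomputable def sphAngle (A B C : EuclideanSpace ℝ (Fin 3)) : ℝ :=
  InnerProductGeometry.angle (B - ⟪A, B⟫ • A) (C - ⟪A, C⟫ • A)

section UnitVectors

variable {V : Type*} [NormedAddCommGroup V] [InnerProductSpace ℝ V] {A B C : V}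

lemma one_sub_real_inner_sq_nonneg (hA : ‖A‖ = 1) (hB : ‖B‖ = 1) : 0 ≤ 1 - ⟪A, B⟫ ^ 2 := by
  have h := abs_real_inner_le_norm A B
  rw [hA, hB, one_mul] at h
  exact sub_nonneg.2 ((sq_le_one_iff_abs_le_one _).2 h)

lemma neg_one_lt_real_inner_of_ne_neg (hA : ‖A‖ = 1) (hB : ‖B‖ = 1) (h : A ≠ -B) :
    -1 < ⟪A, B⟫ :=
  (neg_one_le_real_inner_of_norm_eq_one hA hB).lt_of_ne
    fun h' ↦ h ((inner_eq_neg_one_iff_of_norm_eq_one hA hB).1 h'.symm)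

lemma inner_sub_inner_smul_sub_inner_smul (hA : ‖A‖ = 1) :
    ⟪B - ⟪A, B⟫ • A, C - ⟪A, C⟫ • A⟫ = ⟪B, C⟫ - ⟪A, B⟫ * ⟪A, C⟫ := by
  simp only [inner_sub_left, inner_sub_right, real_inner_smul_left, real_inner_smul_right,
    inner_self_eq_one_of_norm_eq_one hA, real_inner_comm B A]
  ring

lemma norm_sub_inner_smul (hA : ‖A‖ = 1) (hB : ‖B‖ = 1) :
    ‖B - ⟪A, B⟫ • A‖ = √(1 - ⟪A, B⟫ ^ 2) := by
  rw [norm_eq_sqrt_real_inner, inner_sub_inner_smul_sub_inner_smul hA,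
    inner_self_eq_one_of_norm_eq_one hB, sq]

lemma gram_det_nonneg (hA : ‖A‖ = 1) (hB : ‖B‖ = 1) (hC : ‖C‖ = 1) :
    0 ≤ 1 + 2 * ⟪A, B⟫ * ⟪A, C⟫ * ⟪B, C⟫ - ⟪A, B⟫ ^ 2 - ⟪A, C⟫ ^ 2 - ⟪B, C⟫ ^ 2 := by
  have h := real_inner_mul_inner_self_le (B - ⟪A, B⟫ • A) (C - ⟪A, C⟫ • A)
  rw [inner_sub_inner_smul_sub_inner_smul hA, inner_sub_inner_smul_sub_inner_smul hA,
    inner_sub_inner_smul_sub_inner_smul hA, inner_self_eq_one_of_norm_eq_one hB,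
    inner_self_eq_one_of_norm_eq_one hC] at h
  linarith

lemma inner_add_sub_self (hA : ‖A‖ = 1) (h : ⟪B, C⟫ = ⟪A, B⟫ + ⟪A, C⟫ - 1) :
    ⟪A, B + C - A⟫ = ⟪B, C⟫ := by
  rw [inner_sub_right, inner_add_right, inner_self_eq_one_of_norm_eq_one hA, h]

lemma inner_add_sub_left (hB : ‖B‖ = 1) (h : ⟪B, C⟫ = ⟪A, B⟫ + ⟪A, C⟫ - 1) :
    ⟪B, B + C - A⟫ = ⟪A, C⟫ := by
  rw [inner_sub_right, inner_add_right, inner_self_eq_one_of_norm_eq_one hB, h,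
    real_inner_comm A B]
  ring

lemma inner_add_sub_right (hC : ‖C‖ = 1) (h : ⟪B, C⟫ = ⟪A, B⟫ + ⟪A, C⟫ - 1) :
    ⟪C, B + C - A⟫ = ⟪A, B⟫ := by
  rw [inner_sub_right, inner_add_right, inner_self_eq_one_of_norm_eq_one hC, real_inner_comm B C,
    h, real_inner_comm A C]
  ring

lemma norm_add_sub_eq_one (hA : ‖A‖ = 1) (hB : ‖B‖ = 1) (hC : ‖C‖ = 1)
    (h : ⟪B, C⟫ = ⟪A, B⟫ + ⟪A, C⟫ - 1) : ‖B + C - A‖ = 1 := by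
  have hD : ⟪B + C - A, B + C - A⟫ = 1 := by
    rw [inner_sub_left, inner_add_left, inner_add_sub_self hA h, inner_add_sub_left hB h,
      inner_add_sub_right hC h]
    linarith
  rw [norm_eq_sqrt_real_inner, hD, sqrt_one]

end UnitVectors

lemma eq_add_sub_one_of_cos_relations {p q r : ℝ} (hp : -1 < p) (hq : -1 < q) (hr : -1 < r)
    (hr' : r < 1)
    (h₁ : (r - p * q) * (1 - r ^ 2) =
      (q - p * r) * (p - q * r) - (1 + 2 * p * q * r - p ^ 2 - q ^ 2 - r ^ 2))
    (h₂ : (q - p * r) * (1 - q ^ 2) =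
      (r - p * q) * (p - q * r) + (1 + 2 * p * q * r - p ^ 2 - q ^ 2 - r ^ 2)) :
    r = p + q - 1 := by
  have h₁' : (1 - r) * (1 + r - (p + q)) * (1 + r + (p + q)) = 0 := by linear_combination h₁
  obtain h | h := mul_eq_zero.1 h₁'
  · obtain h | h := mul_eq_zero.1 h <;> linarith
  · have h₂' : (p + q) * ((1 + p) * (1 + q)) = 0 := by
      linear_combination (1 / 4) * h₂
        + (1 / 4) * (1 + 3 * p + 2 * q + 3 * p * q + q ^ 2 - r - q * r) * h
    obtain h' | h' := mul_eq_zero.1 h₂'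
    · linarith
    · exact absurd h' (mul_pos (by linarith) (by linarith)).ne'

section SphericalAngle

variable {A B C : EuclideanSpace ℝ (Fin 3)}

lemma sphAngle_comm (A B C : EuclideanSpace ℝ (Fin 3)) : sphAngle A B C = sphAngle A C B :=
  InnerProductGeometry.angle_comm _ _

lemma sphAngle_congr {A' B' C' : EuclideanSpace ℝ (Fin 3)} (hA : ‖A‖ = 1) (hB : ‖B‖ = 1)
    (hC : ‖C‖ = 1) (hA' : ‖A'‖ = 1) (hB' : ‖B'‖ = 1) (hC' : ‖C'‖ = 1)
    (hAB : ⟪A', B'⟫ = ⟪A, B⟫) (hAC : ⟪A', C'⟫ = ⟪A, C⟫) (hBC : ⟪B', C'⟫ = ⟪B, C⟫) :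
    sphAngle A' B' C' = sphAngle A B C := by
  simp only [sphAngle, InnerProductGeometry.angle]
  rw [inner_sub_inner_smul_sub_inner_smul hA, inner_sub_inner_smul_sub_inner_smul hA',
    norm_sub_inner_smul hA hB, norm_sub_inner_smul hA hC, norm_sub_inner_smul hA' hB',
    norm_sub_inner_smul hA' hC', hAB, hAC, hBC]

lemma cos_sphAngle_mul (hA : ‖A‖ = 1) (hB : ‖B‖ = 1) (hC : ‖C‖ = 1) :
    cos (sphAngle A B C) * (√(1 - ⟪A, B⟫ ^ 2) * √(1 - ⟪A, C⟫ ^ 2)) =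
      ⟪B, C⟫ - ⟪A, B⟫ * ⟪A, C⟫ := by
  rw [← norm_sub_inner_smul hA hB, ← norm_sub_inner_smul hA hC, sphAngle,
    InnerProductGeometry.cos_angle_mul_norm_mul_norm, inner_sub_inner_smul_sub_inner_smul hA]

lemma sin_sphAngle_mul (hA : ‖A‖ = 1) (hB : ‖B‖ = 1) (hC : ‖C‖ = 1) :
    sin (sphAngle A B C) * (√(1 - ⟪A, B⟫ ^ 2) * √(1 - ⟪A, C⟫ ^ 2)) =
      √(1 + 2 * ⟪A, B⟫ * ⟪A, C⟫ * ⟪B, C⟫ - ⟪A, B⟫ ^ 2 - ⟪A, C⟫ ^ 2 - ⟪B, C⟫ ^ 2) := by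
  rw [← norm_sub_inner_smul hA hB, ← norm_sub_inner_smul hA hC, sphAngle,
    InnerProductGeometry.sin_angle_mul_norm_mul_norm, inner_sub_inner_smul_sub_inner_smul hA,
    inner_sub_inner_smul_sub_inner_smul hA, inner_sub_inner_smul_sub_inner_smul hA,
    inner_self_eq_one_of_norm_eq_one hB, inner_self_eq_one_of_norm_eq_one hC]
  ring_nf

theorem inner_eq_add_sub_one_of_sphAngle_eq_add (hA : ‖A‖ = 1) (hB : ‖B‖ = 1) (hC : ‖C‖ = 1)
    (hAB : A ≠ -B) (hAC : A ≠ -C) (hBC : B ≠ C) (hBC' : B ≠ -C)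
    (h : sphAngle A B C = sphAngle B A C + sphAngle C A B) :
    ⟪B, C⟫ = ⟪A, B⟫ + ⟪A, C⟫ - 1 := by
  have hG := gram_det_nonneg hA hB hC
  have hcα := cos_sphAngle_mul hA hB hC
  have hsα := sin_sphAngle_mul hA hB hC
  have hcβ := cos_sphAngle_mul hB hA hC
  have hsβ := sin_sphAngle_mul hB hA hC
  have hcγ := cos_sphAngle_mul hC hA hB
  have hsγ := sin_sphAngle_mul hC hA hB
  rw [real_inner_comm A B] at hcβ hsβ
  rw [real_inner_comm A C, real_inner_comm B C] at hcγ hsγ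
  set α := sphAngle A B C
  set β := sphAngle B A C
  set γ := sphAngle C A B
  set p := ⟪A, B⟫
  set q := ⟪A, C⟫
  set r := ⟪B, C⟫
  rw [show 1 + 2 * p * r * q - p ^ 2 - r ^ 2 - q ^ 2 = 1 + 2 * p * q * r - p ^ 2 - q ^ 2 - r ^ 2
    by ring] at hsβ
  rw [show 1 + 2 * q * r * p - q ^ 2 - r ^ 2 - p ^ 2 = 1 + 2 * p * q * r - p ^ 2 - q ^ 2 - r ^ 2
    by ring] at hsγ
  set g := √(1 + 2 * p * q * r - p ^ 2 - q ^ 2 - r ^ 2)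
  set sp := √(1 - p ^ 2)
  set sq := √(1 - q ^ 2)
  set sr := √(1 - r ^ 2)
  have hg : g ^ 2 = 1 + 2 * p * q * r - p ^ 2 - q ^ 2 - r ^ 2 := sq_sqrt hG
  have hsq : sq ^ 2 = 1 - q ^ 2 := sq_sqrt (one_sub_real_inner_sq_nonneg hA hC)
  have hsr : sr ^ 2 = 1 - r ^ 2 := sq_sqrt (one_sub_real_inner_sq_nonneg hB hC)
  have hcos₁ : cos α = cos β * cos γ - sin β * sin γ := by rw [h, cos_add]
  have hcos₂ : cos β = cos α * cos γ + sin α * sin γ := by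
    rw [show β = α - γ by linarith, cos_sub]
  have h₁ : (r - p * q) * (1 - r ^ 2) =
      (q - p * r) * (p - q * r) - (1 + 2 * p * q * r - p ^ 2 - q ^ 2 - r ^ 2) := by
    linear_combination sp * sq * sr ^ 2 * hcos₁ - sr ^ 2 * hcα + cos γ * (sq * sr) * hcβ
      + (q - p * r) * hcγ - sin γ * (sq * sr) * hsβ - g * hsγ - (r - p * q) * hsr - hg
  have h₂ : (q - p * r) * (1 - q ^ 2) =
      (r - p * q) * (p - q * r) + (1 + 2 * p * q * r - p ^ 2 - q ^ 2 - r ^ 2) := by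
    linear_combination sp * sr * sq ^ 2 * hcos₂ + cos γ * (sq * sr) * hcα - sq ^ 2 * hcβ
      + (r - p * q) * hcγ + sin γ * (sq * sr) * hsα + g * hsγ - (q - p * r) * hsq + hg
  exact eq_add_sub_one_of_cos_relations (neg_one_lt_real_inner_of_ne_neg hA hB hAB)
    (neg_one_lt_real_inner_of_ne_neg hA hC hAC) (neg_one_lt_real_inner_of_ne_neg hB hC hBC')
    ((inner_lt_one_iff_real_of_norm_eq_one hB hC).2 hBC) h₁ h₂

end SphericalAngle

theorem spherical_proper_triangle_completes_to_equiangular_quadrilateral_general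
    (A B C : EuclideanSpace ℝ (Fin 3))
    (hA : ‖A‖ = 1) (hB : ‖B‖ = 1) (hC : ‖C‖ = 1)
    (hBC : B ≠ C)
    (hAB' : A ≠ -B) (hAC' : A ≠ -C) (hBC' : B ≠ -C)
    (hangle : sphAngle A B C = sphAngle B A C + sphAngle C A B) :
    ‖B + C - A‖ = 1 ∧
    sphAngle A B C = sphAngle B A (B + C - A) ∧
    sphAngle B A (B + C - A) = sphAngle (B + C - A) B C ∧
    sphAngle (B + C - A) B C = sphAngle C A (B + C - A) := by
  have h := inner_eq_add_sub_one_of_sphAngle_eq_add hA hB hC hAB' hAC' hBC hBC' hangle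
  have hD := norm_add_sub_eq_one hA hB hC h
  have hAD := inner_add_sub_self hA h
  have hBD := inner_add_sub_left hB h
  have hCD := inner_add_sub_right hC h
  have hBAD : sphAngle B A (B + C - A) = sphAngle A B C :=
    sphAngle_congr hA hB hC hB hA hD (real_inner_comm A B) hBD hAD
  have hDBC : sphAngle (B + C - A) B C = sphAngle A B C := by
    rw [sphAngle_comm A]
    exact sphAngle_congr hA hC hB hD hB hC (by rw [real_inner_comm, hBD])
      (by rw [real_inner_comm, hCD]) (real_inner_comm C B)
  have hCAD : sphAngle C A (B + C - A) = sphAngle A B C := by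
    rw [sphAngle_comm A]
    exact sphAngle_congr hA hC hB hC hA hD (real_inner_comm A C) hCD (by rw [hAD, real_inner_comm])
  exact ⟨hD, hBAD.symm, hBAD.trans hDBC.symm, hDBC.trans hCAD.symm⟩

/-- Every properly angled spherical triangle is half of an equiangular
quadrilateral cut along a diagonal: the fourth vertex is `D = B + C - A`. -/
theorem spherical_proper_triangle_completes_to_equiangular_quadrilateral
    (A B C : EuclideanSpace ℝ (Fin 3))
    (hA : ‖A‖ = 1) (hB : ‖B‖ = 1) (hC : ‖C‖ = 1)
    (hAB : A ≠ B) (hAC : A ≠ C) (hBC : B ≠ C)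
    (hAB' : A ≠ -B) (hAC' : A ≠ -C) (hBC' : B ≠ -C)
    (hangle : sphAngle A B C = sphAngle B A C + sphAngle C A B) :
    ‖B + C - A‖ = 1 ∧
    sphAngle A B C = sphAngle B A (B + C - A) ∧
    sphAngle B A (B + C - A) = sphAngle (B + C - A) B C ∧
    sphAngle (B + C - A) B C = sphAngle C A (B + C - A) :=
  spherical_proper_triangle_completes_to_equiangular_quadrilateral_general A B C hA hB hC hBC hAB'
    hAC' hBC' hangle
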